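/- arXiv:1406.0791 — 2 statements merged into one kernel-verified Lean document; each statement's English description precedes it below -/
import Mathlib

section
/- Andreief's identity: for integrable functions f_1,…,f_r and g_1,…,g_r on a measure space (S, μ), one has ∫_{S^r} det(f_i(x_j))_{i,j=1}^r · det(g_i(x_j))_{i,j=1}^r ∏_{j=1}^r dμ(x_j) = r! · det( ∫_S f_i(x) g_j(x) dμ(x) )_{i,j=1}^r. -/
/-!
Expanding `det (g i (x j))` over permutations `τ` and absorbing each product `∏ j, g (τ j) (x j)`
into the columns of `det (f i (x j))` turns the integrand into
`∑ τ, sign τ * det (f i (x j) * g (τ j) (x j))`. In each of these determinants column `j` depends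
on `x j` alone, so multilinearity and Fubini give the integral `det (∫ f i * g (τ j) dμ)`, which is
`sign τ * det (∫ f i * g j dμ)`. Since `sign τ ^ 2 = 1`, all `r!` terms are equal.
-/

open MeasureTheory Matrix Equiv

namespace Matrix

variable {ι R : Type*} [Fintype ι] [DecidableEq ι] [CommRing R]

theorem det_mul_det_eq_sum_sign_mul_det (M N : Matrix ι ι R) :
    M.det * N.det = ∑ τ : Perm ι, (Perm.sign τ : R) * det (of fun i j => M i j * N (τ j) j) := by
  rw [det_apply' N, Finset.mul_sum]
  refine Finset.sum_congr rfl fun τ _ => ?_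
  simp_rw [mul_comm (M _ _), det_mul_row]
  ring

theorem sum_sign_mul_det_submatrix_id (M : Matrix ι ι R) :
    ∑ τ : Perm ι, (Perm.sign τ : R) * (M.submatrix id τ).det
      = (Fintype.card ι).factorial * M.det := by
  simp_rw [det_permute', ← mul_assoc, ← Int.cast_mul, ← Units.val_mul, Int.units_mul_self,
    Units.val_one, Int.cast_one, one_mul, Finset.sum_const, Finset.card_univ, Fintype.card_perm,
    nsmul_eq_mul]

end Matrix

namespace MeasureTheory

variable {ι 𝕜 : Type*} [Fintype ι] [DecidableEq ι] [RCLike 𝕜] {E : ι → Type*}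
  {mE : ∀ j, MeasurableSpace (E j)} {μ : (j : ι) → Measure (E j)} [∀ j, SigmaFinite (μ j)]
  {F : ι → (j : ι) → E j → 𝕜}

theorem Integrable.det_of_pi (hF : ∀ i j, Integrable (F i j) (μ j)) :
    Integrable (fun x : (j : ι) → E j => (of fun i j => F i j (x j)).det) (Measure.pi μ) := by
  simp_rw [det_apply', of_apply]
  refine integrable_finsetSum _ fun σ _ => ?_
  exact (Integrable.fintype_prod_dep fun j => hF (σ j) j).const_mul _

theorem integral_det_of_pi (hF : ∀ i j, Integrable (F i j) (μ j)) :
    ∫ x, (of fun i j => F i j (x j)).det ∂(Measure.pi μ)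
      = (of fun i j => ∫ t, F i j t ∂(μ j)).det := by
  simp_rw [det_apply', of_apply]
  rw [integral_finsetSum _ fun σ _ =>
    (Integrable.fintype_prod_dep fun j => hF (σ j) j).const_mul _]
  refine Finset.sum_congr rfl fun σ _ => ?_
  rw [integral_const_mul, integral_fintype_prod_eq_prod (fun j => F (σ j) j)]

end MeasureTheory

theorem andreief_identity_general {S : Type*} [MeasurableSpace S] (μ : Measure S) [SigmaFinite μ]
    (r : ℕ) (f g : Fin r → S → ℂ)
    (hint : ∀ i j, Integrable (fun x => f i x * g j x) μ) :
    ∫ x : Fin r → S,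
        (Matrix.of fun i j => f i (x j)).det * (Matrix.of fun i j => g i (x j)).det
        ∂(Measure.pi fun _ => μ)
      = (r.factorial : ℂ) * (Matrix.of fun i j => ∫ t, f i t * g j t ∂μ).det := by
  set A : Matrix (Fin r) (Fin r) ℂ := of fun i j => ∫ t, f i t * g j t ∂μ
  simp_rw [det_mul_det_eq_sum_sign_mul_det, of_apply]
  rw [integral_finsetSum _ fun τ _ => (Integrable.det_of_pi fun i j => hint i (τ j)).const_mul _]
  calc _ = ∑ τ : Perm (Fin r), (Perm.sign τ : ℂ) * (A.submatrix id τ).det := by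
          refine Finset.sum_congr rfl fun τ _ => ?_
          rw [integral_const_mul, integral_det_of_pi fun i j => hint i (τ j)]
          rfl
    _ = r.factorial * A.det := by
          rw [sum_sign_mul_det_submatrix_id, Fintype.card_fin]

/-- Andreief's identity: for integrable functions `f₁,…,f_r` and `g₁,…,g_r` on a
measure space `(S, μ)`,
`∫_{S^r} det(fᵢ(xⱼ)) · det(gᵢ(xⱼ)) ∏ dμ(xⱼ) = r! · det(∫ fᵢ g_j dμ)`. -/
theorem andreief_identity {S : Type*} [MeasurableSpace S] (μ : Measure S) [SigmaFinite μ]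
    (r : ℕ) (f g : Fin r → S → ℂ)
    (hmf : ∀ i, Measurable (f i)) (hmg : ∀ i, Measurable (g i))
    (hint : ∀ i j, Integrable (fun x => f i x * g j x) μ) :
    ∫ x : Fin r → S,
        (Matrix.of fun i j => f i (x j)).det * (Matrix.of fun i j => g i (x j)).det
        ∂(Measure.pi fun _ => μ)
      = (r.factorial : ℂ) * (Matrix.of fun i j => ∫ t, f i t * g j t ∂μ).det :=
  andreief_identity_general μ r f g hint
end

section
/- Single-spike contour formula for ${}_0F_0^{(1)}$: for x > 0 and y_1,…,y_n pairwise distinct complex numbers, ${}_0F_0^{(1)}(\mathrm{diag}(x,0,…,0), \mathrm{diag}(y_1,…,y_n)) = \frac{(n−1)!}{x^{n−1}} \cdot \frac{1}{2πι} ∮_C \frac{e^{xz}}{∏_{s=1}^n (z − y_s)} dz = \frac{(n−1)!}{x^{n−1}} ∑_{s=1}^n \frac{e^{x y_s}}{∏_{t≠s}(y_s − y_t)}$, where C encloses all y_s counter-clockwise. Equivalently, $∑_{k=0}^∞ \frac{x^k}{k!} \frac{C_{(k)}^{(1)}(y_1,…,y_n)}{C_{(k)}^{(1)}(1,…,1)}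 = \frac{(n−1)!}{x^{n−1}} ∑_{s=1}^n \frac{e^{x y_s}}{∏_{t≠s}(y_s − y_t)}$. -/
/-!
With the barycentric weights `w_s = ∏_{t ≠ s} (y_s - y_t)⁻¹`, partial fractions give
`1 / ∏_s (z - y_s) = ∑_s w_s / (z - y_s)`, so Cauchy's integral formula turns the contour
integral into the residue sum `∑_s w_s e^{x y_s} = ∑_m x^m / m! · D(m)`, where
`D(m) = ∑_s w_s y_s^m` is the divided difference of `z^m` at the nodes. For `m < n` the
polynomial `X^m` is its own Lagrange interpolant, whose coefficient of `X^(n-1)` is `D(m)`;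
so `D(m) = 0` for `m < n - 1` and `D(n - 1) = 1`. Beyond that, adding a node `y_i` gives
`D(m + 1) = y_i D(m) + D'(m)` (with `D'` taken without `y_i`), the recursion of the complete
homogeneous polynomials, so `D(n - 1 + k) = h_k(y)`.
-/

open Complex

/-- The complete homogeneous symmetric polynomial `h_k(y₁,…,y_n)`. -/
noncomputable def completeHomogeneous (n k : ℕ) (y : Fin n → ℂ) : ℂ :=
  ∑ m : Sym (Fin n) k, ((m : Multiset (Fin n)).map y).prod

open Finset Polynomial
open scoped Nat Real

section CompleteHomogeneous

variable {ι R : Type*} [DecidableEq ι] [CommSemiring R]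

def completeHomogeneousOn (s : Finset ι) (v : ι → R) (k : ℕ) : R :=
  ∑ f ∈ s.piAntidiag k, ∏ i ∈ s, v i ^ f i

@[simp]
lemma completeHomogeneousOn_zero (s : Finset ι) (v : ι → R) :
    completeHomogeneousOn s v 0 = 1 := by
  simp [completeHomogeneousOn]

@[simp]
lemma completeHomogeneousOn_empty_succ (v : ι → R) (k : ℕ) :
    completeHomogeneousOn ∅ v (k + 1) = 0 := by
  simp [completeHomogeneousOn]

lemma completeHomogeneousOn_cons {i : ι} {s : Finset ι} (hi : i ∉ s) (v : ι → R) (k : ℕ) :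
    completeHomogeneousOn (cons i s hi) v k =
      ∑ p ∈ antidiagonal k, v i ^ p.1 * completeHomogeneousOn s v p.2 := by
  rw [completeHomogeneousOn, piAntidiag_cons hi, sum_disjiUnion]
  refine sum_congr rfl fun p _ => ?_
  rw [sum_map, completeHomogeneousOn, mul_sum]
  refine sum_congr rfl fun f hf => ?_
  have hfi : f i = 0 := by
    by_contra h
    exact hi ((mem_piAntidiag.mp hf).2 i h)
  rw [prod_cons]
  simp only [addRightEmbedding_apply, Pi.add_apply, hfi, zero_add]
  congr 1
  refine prod_congr rfl fun t ht => ?_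
  simp [ne_of_mem_of_not_mem ht hi]

lemma completeHomogeneousOn_insert_succ {i : ι} {s : Finset ι} (hi : i ∉ s) (v : ι → R)
    (k : ℕ) :
    completeHomogeneousOn (insert i s) v (k + 1) =
      v i * completeHomogeneousOn (insert i s) v k + completeHomogeneousOn s v (k + 1) := by
  simp only [← cons_eq_insert i s hi, completeHomogeneousOn_cons hi, Nat.sum_antidiagonal_succ,
    mul_sum, pow_zero, one_mul, pow_succ', mul_assoc,
    add_comm (completeHomogeneousOn s v (k + 1))]

lemma completeHomogeneousOn_univ (n k : ℕ) (y : Fin n → ℂ) :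
    completeHomogeneousOn univ y k = completeHomogeneous n k y := by
  rw [completeHomogeneousOn, ← map_sym_eq_piAntidiag univ k, sum_map, completeHomogeneous,
    sym_univ]
  refine sum_congr rfl fun m _ => ?_
  rw [prod_multiset_map_count]
  refine (prod_subset (subset_univ _) fun i _ hi => ?_).symm
  have : Multiset.count i (m : Multiset (Fin n)) = 0 :=
    Multiset.count_eq_zero_of_notMem (by simpa using hi)
  simp [this]

end CompleteHomogeneous

namespace Lagrange

variable {F ι : Type*} [Field F] [DecidableEq ι] {s : Finset ι} {v : ι → F}

lemma inv_prod_sub_eq_sum_nodalWeight_mul_inv (hvs : Set.InjOn v s) (hs : s.Nonempty) {x : F}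
    (hx : ∀ i ∈ s, x ≠ v i) :
    (∏ i ∈ s, (x - v i))⁻¹ = ∑ i ∈ s, nodalWeight s v i * (x - v i)⁻¹ := by
  have h := eval_interpolate_not_at_node 1 hx
  rw [interpolate_one hvs hs, eval_one, eval_nodal] at h
  simp only [Pi.one_apply, mul_one] at h
  exact inv_eq_of_mul_eq_one_right h.symm

lemma coeff_interpolate_card_sub_one (r : ι → F) :
    (interpolate s v r).coeff (#s - 1) = ∑ i ∈ s, nodalWeight s v i * r i := by
  rw [interpolate_eq_nodalWeight_mul_nodal_div_X_sub_C, finsetSum_coeff]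
  refine sum_congr rfl fun i hi => ?_
  have hmonic : (nodal (s.erase i) v).coeff (#s - 1) = 1 := by
    simpa [natDegree_nodal, card_erase_of_mem hi] using
      (nodal_monic (s := s.erase i) (v := v)).coeff_natDegree
  rw [coeff_mul_C, coeff_C_mul, ← nodal_erase_eq_nodal_div hi, hmonic, mul_one]

lemma sum_nodalWeight_mul_pow_of_lt (hvs : Set.InjOn v s) {m : ℕ} (hm : m < #s) :
    ∑ i ∈ s, nodalWeight s v i * v i ^ m = if m = #s - 1 then 1 else 0 := by
  have h := congrArg (coeff · (#s - 1)) (eq_interpolate (f := X ^ m) hvs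
    (by rw [degree_X_pow]; exact_mod_cast hm))
  simp only [eval_pow, eval_X, coeff_interpolate_card_sub_one, coeff_X_pow] at h
  rw [← h]
  exact if_congr eq_comm rfl rfl

lemma nodalWeight_insert_of_ne {i j : ι} (hi : i ∉ s) (hji : j ≠ i) :
    nodalWeight (insert i s) v j = (v j - v i)⁻¹ * nodalWeight s v j := by
  rw [nodalWeight, erase_insert_of_ne hji.symm, prod_insert (fun h => hi (mem_of_mem_erase h)),
    nodalWeight]

lemma sum_nodalWeight_insert_mul_pow_succ {i : ι} (hi : i ∉ s)
    (hvs : Set.InjOn v ↑(insert i s)) (m : ℕ) :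
    ∑ j ∈ insert i s, nodalWeight (insert i s) v j * v j ^ (m + 1) =
      v i * ∑ j ∈ insert i s, nodalWeight (insert i s) v j * v j ^ m +
        ∑ j ∈ s, nodalWeight s v j * v j ^ m := by
  have hterm : ∀ j, nodalWeight (insert i s) v j * v j ^ (m + 1) -
      v i * (nodalWeight (insert i s) v j * v j ^ m) =
        nodalWeight (insert i s) v j * (v j - v i) * v j ^ m := fun j => by ring
  rw [← sub_eq_iff_eq_add', mul_sum, ← sum_sub_distrib, sum_congr rfl fun j _ => hterm j,
    sum_insert hi, sub_self, mul_zero, zero_mul, zero_add]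
  refine sum_congr rfl fun j hj => ?_
  have hji : j ≠ i := ne_of_mem_of_not_mem hj hi
  have hvji : v j - v i ≠ 0 := sub_ne_zero.mpr fun h => hji (hvs (by simp [hj]) (by simp) h)
  rw [nodalWeight_insert_of_ne hi hji, mul_comm (v j - v i)⁻¹, inv_mul_cancel_right₀ hvji]

lemma sum_nodalWeight_mul_pow_card_sub_one_add (hvs : Set.InjOn v s) (hs : s.Nonempty)
    (k : ℕ) :
    ∑ i ∈ s, nodalWeight s v i * v i ^ (#s - 1 + k) = completeHomogeneousOn s v k := by
  induction s using Finset.induction_on generalizing k with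
  | empty => exact absurd hs not_nonempty_empty
  | insert i s hi ih =>
    have hvs' : Set.InjOn v s := hvs.mono (by simp)
    rw [card_insert_of_notMem hi, Nat.add_sub_cancel]
    induction k with
    | zero =>
      rw [add_zero, sum_nodalWeight_mul_pow_of_lt hvs (by simp [card_insert_of_notMem hi]),
        card_insert_of_notMem hi, Nat.add_sub_cancel, if_pos rfl, completeHomogeneousOn_zero]
    | succ k ihk =>
      rw [← add_assoc, sum_nodalWeight_insert_mul_pow_succ hi hvs, ihk,
        completeHomogeneousOn_insert_succ hi]
      congr 1
      rcases s.eq_empty_or_nonempty with rfl | hs'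
      · rw [sum_empty, completeHomogeneousOn_empty_succ]
      · have hcard : #s - 1 + (k + 1) = #s + k := by have := hs'.card_pos; omega
        rw [← ih hvs' hs', hcard]

end Lagrange

open Lagrange Metric

section Residues

variable {ι : Type*} [DecidableEq ι] {s : Finset ι} {v : ι → ℂ}

lemma sum_nodalWeight_mul_exp_mul (hvs : Set.InjOn v s) (hs : s.Nonempty) (x : ℂ) :
    ∑ i ∈ s, nodalWeight s v i * exp (x * v i) =
      ∑' k, x ^ (#s - 1 + k) / (#s - 1 + k)! * completeHomogeneousOn s v k := by
  have hsummable : Summable fun m : ℕ => ∑ i ∈ s, nodalWeight s v i * ((x * v i) ^ m / m !) :=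
    summable_sum fun i _ => (NormedSpace.expSeries_div_summable (x * v i)).mul_left _
  have hterm : ∀ m : ℕ, ∑ i ∈ s, nodalWeight s v i * ((x * v i) ^ m / m !) =
      x ^ m / m ! * ∑ i ∈ s, nodalWeight s v i * v i ^ m := fun m => by
    rw [mul_sum]
    exact sum_congr rfl fun i _ => by ring
  calc ∑ i ∈ s, nodalWeight s v i * exp (x * v i)
      = ∑' m : ℕ, ∑ i ∈ s, nodalWeight s v i * ((x * v i) ^ m / m !) := by
        rw [Summable.tsum_finsetSum fun i _ =>
          (NormedSpace.expSeries_div_summable (x * v i)).mul_left _]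
        simp only [Complex.exp_eq_exp_ℂ, NormedSpace.exp_eq_tsum_div, tsum_mul_left]
    _ = ∑' k, x ^ (#s - 1 + k) / (#s - 1 + k)! *
          ∑ i ∈ s, nodalWeight s v i * v i ^ (#s - 1 + k) := by
        rw [← hsummable.sum_add_tsum_nat_add (#s - 1), sum_eq_zero, zero_add]
        · simp only [hterm, add_comm]
        · intro m hm
          have hm : m < #s - 1 := mem_range.mp hm
          rw [hterm, sum_nodalWeight_mul_pow_of_lt hvs (by omega), if_neg (by omega), mul_zero]
    _ = ∑' k, x ^ (#s - 1 + k) / (#s - 1 + k)! * completeHomogeneousOn s v k := by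
        simp only [sum_nodalWeight_mul_pow_card_sub_one_add hvs hs]

theorem circleIntegral_div_prod_sub {f : ℂ → ℂ} {c : ℂ} {R : ℝ}
    (hf : DiffContOnCl ℂ f (ball c R)) (hvs : Set.InjOn v s) (hs : s.Nonempty)
    (hv : ∀ i ∈ s, v i ∈ ball c R) :
    ∮ z in C(c, R), f z / ∏ i ∈ s, (z - v i) =
      2 * π * I * ∑ i ∈ s, nodalWeight s v i * f (v i) := by
  obtain ⟨i₀, hi₀⟩ := hs
  have hR : 0 < R := pos_of_mem_ball (hv i₀ hi₀)
  have hne : ∀ z ∈ sphere c R, ∀ i ∈ s, z ≠ v i := by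
    rintro z hz i hi rfl
    exact (mem_ball.mp (hv i hi)).ne (mem_sphere.mp hz)
  have hfc : ContinuousOn f (sphere c R) :=
    hf.continuousOn.mono (closure_ball c hR.ne' ▸ sphere_subset_closedBall)
  calc ∮ z in C(c, R), f z / ∏ i ∈ s, (z - v i)
      = ∮ z in C(c, R), ∑ i ∈ s, (z - v i)⁻¹ • (nodalWeight s v i * f z) := by
        refine circleIntegral.integral_congr hR.le fun z hz => ?_
        simp only [div_eq_mul_inv, mul_sum, smul_eq_mul,
          inv_prod_sub_eq_sum_nodalWeight_mul_inv hvs ⟨i₀, hi₀⟩ (hne z hz)]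
        exact sum_congr rfl fun i _ => by ring
    _ = ∑ i ∈ s, ∮ z in C(c, R), (z - v i)⁻¹ • (nodalWeight s v i * f z) := by
        refine circleIntegral.integral_fun_sum fun i hi => ContinuousOn.circleIntegrable hR.le ?_
        exact ((continuousOn_id.sub continuousOn_const).inv₀ fun z hz =>
          sub_ne_zero.mpr (hne z hz i hi)).smul (continuousOn_const.mul hfc)
    _ = ∑ i ∈ s, (2 * π * I : ℂ) • (nodalWeight s v i * f (v i)) :=
        sum_congr rfl fun i hi =>
          (hf.const_smul (nodalWeight s v i)).circleIntegral_sub_inv_smul (hv i hi)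
    _ = 2 * π * I * ∑ i ∈ s, nodalWeight s v i * f (v i) := by
        simp only [smul_eq_mul, mul_sum]

end Residues

/-- Single-spike contour formula for `₀F₀^{(1)}`: for `x > 0` and pairwise distinct
`y₁,…,y_n`, the Jack series with rank-one first argument, which reduces (using
`C_{(k)}^{(1)}(y)/C_{(k)}^{(1)}(Iₙ) = h_k(y)·k!·(n−1)!/(n−1+k)!`) to
`∑ₖ x^k/k! · h_k(y) k! (n−1)!/(n−1+k)!`, equals
`(n−1)!/x^{n−1} · (1/(2πι)) ∮ e^{xz}/∏(z−y_s) dz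
  = (n−1)!/x^{n−1} · ∑_s e^{x y_s}/∏_{t≠s}(y_s−y_t)`. -/
theorem single_spike_contour_formula (n : ℕ) (hn : 0 < n) (x : ℝ) (hx : 0 < x)
    (y : Fin n → ℂ) (hdist : Function.Injective y)
    (R : ℝ) (hR : ∀ s, ‖y s‖ < R) :
    (∑' k : ℕ, ((x : ℂ) ^ k / (k.factorial : ℂ)) *
        (completeHomogeneous n k y * (k.factorial : ℂ) * ((n - 1).factorial : ℂ) /
          ((n - 1 + k).factorial : ℂ)))
      = (((n - 1).factorial : ℂ) / (x : ℂ) ^ (n - 1)) *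
        ((1 / (2 * Real.pi * Complex.I)) *
          ∮ z in C(0, R), Complex.exp ((x : ℂ) * z) / ∏ s, (z - y s)) ∧
    (((n - 1).factorial : ℂ) / (x : ℂ) ^ (n - 1)) *
        ((1 / (2 * Real.pi * Complex.I)) *
          ∮ z in C(0, R), Complex.exp ((x : ℂ) * z) / ∏ s, (z - y s))
      = (((n - 1).factorial : ℂ) / (x : ℂ) ^ (n - 1)) *
        ∑ s, Complex.exp ((x : ℂ) * y s) / ∏ t ∈ Finset.univ.erase s, (y s - y t) := by
  have hy : Set.InjOn y (univ : Finset (Fin n)) := hdist.injOn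
  have hne : (univ : Finset (Fin n)).Nonempty := univ_nonempty_iff.mpr ⟨⟨0, hn⟩⟩
  have hx0 : (x : ℂ) ≠ 0 := ofReal_ne_zero.mpr hx.ne'
  have hresidue : 1 / (2 * π * I) * ∮ z in C(0, R), exp (x * z) / ∏ s, (z - y s) =
      ∑ s, nodalWeight univ y s * exp (x * y s) := by
    have hexp : Differentiable ℂ fun z => exp (x * z) := by fun_prop
    rw [circleIntegral_div_prod_sub hexp.diffContOnCl hy hne
      fun s _ => mem_ball_zero_iff.mpr (hR s), ← mul_assoc,
      one_div_mul_cancel (by simp [Real.pi_ne_zero]), one_mul]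
  have hseries : ∑' k : ℕ, (x : ℂ) ^ k / k ! *
        (completeHomogeneous n k y * k ! * (n - 1)! / (n - 1 + k)!) =
      (n - 1)! / (x : ℂ) ^ (n - 1) *
        ∑' k, (x : ℂ) ^ (n - 1 + k) / (n - 1 + k)! * completeHomogeneous n k y := by
    rw [← tsum_mul_left]
    refine tsum_congr fun k => ?_
    have hk : (k ! : ℂ) ≠ 0 := Nat.cast_ne_zero.mpr k.factorial_ne_zero
    rw [pow_add]
    field_simp
  refine ⟨?_, ?_⟩
  · rw [hseries, hresidue, sum_nodalWeight_mul_exp_mul hy hne, card_univ, Fintype.card_fin]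
    simp only [completeHomogeneousOn_univ]
  · rw [hresidue]
    congr 1
    refine sum_congr rfl fun s _ => ?_
    rw [nodalWeight, prod_inv_distrib, div_eq_inv_mul, mul_comm]
end
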